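/- Core integral bound in Proposition 3.2 (dyadic average of the angular singularity after Lorentz-frame reduction): For every γ ∈ (0,1) there is a constant C > 0 such that for every real number a ≥ 2 and every integer k ∈ ℤ: ∫_0^∞ ( y / √(y²+a²) ) · ḡ(y)^{−2−γ} · 1_{2^{−k−1} ≤ ḡ(y) ≤ 2^{−k}} dy ≤ C · 2^{kγ} / a, where ḡ(y) := √( (a/2)(√(y²+a²) − a) ). -/

import Mathlib

/-!
Substituting `u = √(y² + a²)`, with `du = y / u dy`, turns the integral into one in `u` of a
function of `ḡ = √((a/2)(u - a))` alone. The dyadic condition `c ≤ ḡ ≤ 2c`, `c = 2^(-k-1)`,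
confines `u` to an interval of length `6c²/a`, on which `ḡ^(-2-γ) ≤ c^(-2-γ)`; this gives the
bound `6 c^(-γ) / a = 6 · 2^γ · 2^(kγ) / a`.
-/

open MeasureTheory

noncomputable section

def gbar (a y : ℝ) : ℝ := Real.sqrt (a / 2 * (Real.sqrt (y ^ 2 + a ^ 2) - a))

open Real Set

lemma hasDerivAt_sqrt_sq_add_sq {a : ℝ} (ha : a ≠ 0) (y : ℝ) :
    HasDerivAt (fun x : ℝ => √(x ^ 2 + a ^ 2)) (y / √(y ^ 2 + a ^ 2)) y := by
  have hpos : 0 < y ^ 2 + a ^ 2 := by positivity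
  convert ((hasDerivAt_pow 2 y).add_const (a ^ 2)).sqrt hpos.ne' using 1
  field_simp
  ring

lemma injOn_sqrt_sq_add_sq (a : ℝ) : InjOn (fun x : ℝ => √(x ^ 2 + a ^ 2)) (Ici 0) := by
  intro x hx y hy hxy
  rw [sqrt_inj (by positivity) (by positivity), add_left_inj] at hxy
  exact (pow_left_inj₀ hx hy two_ne_zero).1 hxy

lemma setIntegral_Ioi_mul_comp_sqrt_sq_add_sq {a : ℝ} (ha : a ≠ 0) (G : ℝ → ℝ) :
    ∫ y in Ioi 0, y / √(y ^ 2 + a ^ 2) * G √(y ^ 2 + a ^ 2)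
      = ∫ u in (fun x : ℝ => √(x ^ 2 + a ^ 2)) '' Ioi 0, G u := by
  rw [integral_image_eq_integral_abs_deriv_smul measurableSet_Ioi
    (fun y _ => (hasDerivAt_sqrt_sq_add_sq ha y).hasDerivWithinAt)
    ((injOn_sqrt_sq_add_sq a).mono Ioi_subset_Ici_self)]
  refine setIntegral_congr_fun measurableSet_Ioi fun y (hy : 0 < y) => ?_
  rw [smul_eq_mul, abs_of_nonneg (by positivity)]

lemma mem_Icc_of_mem_Icc_sqrt_half_mul_sub {a c c' u : ℝ} (ha : 0 < a) (hc : 0 < c)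
    (hcu : c ≤ √(a / 2 * (u - a))) (huc' : √(a / 2 * (u - a)) ≤ c') :
    u ∈ Icc (a + 2 * c ^ 2 / a) (a + 2 * c' ^ 2 / a) := by
  have hlow : c ^ 2 ≤ a / 2 * (u - a) := (le_sqrt' hc).1 hcu
  have hup : a / 2 * (u - a) ≤ c' ^ 2 := (sqrt_le_iff.1 huc').2
  have hlow' : 2 * c ^ 2 / a ≤ u - a := by rw [div_le_iff₀ ha]; linarith
  have hup' : u - a ≤ 2 * c' ^ 2 / a := by rw [le_div_iff₀ ha]; linarith
  constructor <;> linarith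

lemma setIntegral_ite_sqrt_half_mul_sub_rpow_le {a c c' p : ℝ} (ha : 0 < a) (hc : 0 < c)
    (hcc' : c ≤ c') (hp : p ≤ 0) (S : Set ℝ) :
    ∫ u in S, (if c ≤ √(a / 2 * (u - a)) ∧ √(a / 2 * (u - a)) ≤ c' then
        √(a / 2 * (u - a)) ^ p else 0)
      ≤ c ^ p * (2 * (c' ^ 2 - c ^ 2) / a) := by
  set bound := (Icc (a + 2 * c ^ 2 / a) (a + 2 * c' ^ 2 / a)).indicator fun _ => c ^ p
  have hbound_nonneg : ∀ u, 0 ≤ bound u := indicator_nonneg fun _ _ => by positivity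
  have hbound : Integrable bound :=
    (integrableOn_const measure_Icc_lt_top.ne).integrable_indicator measurableSet_Icc
  calc _ ≤ ∫ u in S, bound u := by
        refine integral_mono_of_nonneg (ae_of_all _ fun u => ?_) hbound.restrict
          (ae_of_all _ fun u => ?_)
        · dsimp only
          split_ifs <;> positivity
        · dsimp only
          split_ifs with h
          · exact (rpow_le_rpow_of_nonpos hc h.1 hp).trans_eq
              (indicator_of_mem (mem_Icc_of_mem_Icc_sqrt_half_mul_sub ha hc h.1 h.2)
                fun _ => c ^ p).symm
          · exact hbound_nonneg u
    _ ≤ ∫ u, bound u := setIntegral_le_integral hbound (ae_of_all _ hbound_nonneg)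
    _ = c ^ p * (2 * (c' ^ 2 - c ^ 2) / a) := by
        rw [integral_indicator_const _ measurableSet_Icc,
          Real.volume_real_Icc_of_le (by gcongr), smul_eq_mul]
        ring

lemma two_zpow_neg_sub_one_rpow_neg (k : ℤ) (γ : ℝ) :
    ((2 : ℝ) ^ (-k - 1)) ^ (-γ) = 2 ^ γ * 2 ^ ((k : ℝ) * γ) := by
  rw [← rpow_intCast, ← rpow_mul zero_le_two, ← rpow_add zero_lt_two]
  push_cast
  ring_nf

/-- **Core integral bound in Proposition 3.2** (dyadic average of the angular
singularity after the Lorentz-frame reduction). -/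
theorem core_integral_bound (γ : ℝ) (hγ : γ ∈ Set.Ioo (0 : ℝ) 1) :
    ∃ C : ℝ, 0 < C ∧
      ∀ a : ℝ, 2 ≤ a → ∀ k : ℤ,
        (∫ y in Set.Ioi (0 : ℝ),
          if (2 : ℝ) ^ (-k - 1) ≤ gbar a y ∧ gbar a y ≤ (2 : ℝ) ^ (-k) then
            y / Real.sqrt (y ^ 2 + a ^ 2) * gbar a y ^ (-2 - γ)
          else 0)
        ≤ C * (2 : ℝ) ^ ((k : ℝ) * γ) / a := by
  refine ⟨6 * 2 ^ γ, by positivity, fun a ha k => ?_⟩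
  have ha0 : 0 < a := by linarith
  set c : ℝ := 2 ^ (-k - 1) with hc_def
  have hc : 0 < c := by positivity
  have hc' : (2 : ℝ) ^ (-k) = 2 * c := by
    rw [hc_def, zpow_sub₀ two_ne_zero, zpow_one]
    ring
  rw [hc']
  calc _ = ∫ u in (fun x : ℝ => √(x ^ 2 + a ^ 2)) '' Ioi 0,
        (if c ≤ √(a / 2 * (u - a)) ∧ √(a / 2 * (u - a)) ≤ 2 * c then
          √(a / 2 * (u - a)) ^ (-2 - γ) else 0) := by
        rw [← setIntegral_Ioi_mul_comp_sqrt_sq_add_sq ha0.ne']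
        simp only [gbar, mul_ite, mul_zero]
        rfl
    _ ≤ c ^ (-2 - γ) * (2 * ((2 * c) ^ 2 - c ^ 2) / a) :=
        setIntegral_ite_sqrt_half_mul_sub_rpow_le ha0 hc (by linarith) (by linarith [hγ.1]) _
    _ = 6 * c ^ (-γ) / a := by
        rw [sub_eq_add_neg, rpow_add hc, rpow_neg hc.le, rpow_two]
        field_simp
        ring
    _ = 6 * 2 ^ γ * 2 ^ ((k : ℝ) * γ) / a := by
        rw [two_zpow_neg_sub_one_rpow_neg]
        ring
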